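/- arXiv:1503.03130 — 6 statements merged into one kernel-verified Lean document; each statement's English description precedes it below -/
import Mathlib

section
/- Fix a real number R > 0 and define the probability density p_Φ(φ) = (1/(2π))·e^{−R²} + (R/√(4π))·cos(φ)·e^{−R² sin²(φ)}·erfc(−R cos(φ)) for φ ∈ [−π, π). Then ∫_{−π}^{π} cos(φ)·p_Φ(φ) dφ ≥ 1 − 1/R² and ∫_{−π}^{π} sin(φ)·p_Φ(φ) dφ = 0. -/
open Real MeasureTheory intervalIntegral

/-- The complementary error function `erfc z = (2/√π) ∫_z^∞ e^{-t²} dt`. -/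
noncomputable def erfc (z : ℝ) : ℝ := (2 / Real.sqrt π) * ∫ t in Set.Ioi z, Real.exp (-t ^ 2)

lemma integrable_gauss : Integrable (fun t : ℝ => Real.exp (-t ^ 2)) := by
  simpa using integrable_exp_neg_mul_sq (one_pos)

lemma erfc_add_erfc_neg (x : ℝ) : erfc (-x) + erfc x = 2 := by
  have h1 : (∫ t in Set.Iic x, Real.exp (-t ^ 2)) = ∫ t in Set.Ioi (-x), Real.exp (-t ^ 2) := by
    rw [← integral_comp_neg_Iic]
    simp [neg_sq]
  have h2 : (∫ t in Set.Iic x, Real.exp (-t ^ 2)) + (∫ t in Set.Ioi x, Real.exp (-t ^ 2))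
      = ∫ t : ℝ, Real.exp (-t ^ 2) := by
    rw [← Set.compl_Iic]
    exact MeasureTheory.integral_add_compl measurableSet_Iic integrable_gauss
  have h3 : (∫ t : ℝ, Real.exp (-t ^ 2)) = Real.sqrt π := by
    simpa using integral_gaussian 1
  have hπ : Real.sqrt π ≠ 0 := by positivity
  unfold erfc
  rw [← h1]
  field_simp
  rw [← h3]
  linarith [h2]

lemma continuous_erfc : Continuous erfc := by
  have hint : ∀ a b : ℝ, IntervalIntegrable (fun t : ℝ => Real.exp (-t ^ 2)) volume a b :=
    fun a b => integrable_gauss.intervalIntegrable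
  have key : ∀ z : ℝ, erfc z
      = (2 / Real.sqrt π) * ((∫ t in Set.Ioi (0:ℝ), Real.exp (-t ^ 2)) - ∫ t in (0:ℝ)..z, Real.exp (-t ^ 2)) := by
    intro z
    unfold erfc
    congr 1
    have h := intervalIntegral.integral_Iic_sub_Iic (f := fun t : ℝ => Real.exp (-t ^ 2))
      (μ := volume) (a := 0) (b := z) integrable_gauss.integrableOn integrable_gauss.integrableOn
    have h0 : (∫ t in Set.Iic (0:ℝ), Real.exp (-t ^ 2)) + (∫ t in Set.Ioi (0:ℝ), Real.exp (-t ^ 2))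
        = ∫ t : ℝ, Real.exp (-t ^ 2) := by
      rw [← Set.compl_Iic]
      exact MeasureTheory.integral_add_compl measurableSet_Iic integrable_gauss
    have hz : (∫ t in Set.Iic z, Real.exp (-t ^ 2)) + (∫ t in Set.Ioi z, Real.exp (-t ^ 2))
        = ∫ t : ℝ, Real.exp (-t ^ 2) := by
      rw [← Set.compl_Iic]
      exact MeasureTheory.integral_add_compl measurableSet_Iic integrable_gauss
    linarith
  have : Continuous fun z : ℝ => (2 / Real.sqrt π) * ((∫ t in Set.Ioi (0:ℝ), Real.exp (-t ^ 2)) - ∫ t in (0:ℝ)..z, Real.exp (-t ^ 2)) :=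
    continuous_const.mul (continuous_const.sub (intervalIntegral.continuous_primitive hint 0))
  exact (funext key) ▸ this

section main
variable (R : ℝ)

noncomputable def gg (x : ℝ) : ℝ := Real.cos x ^ 2 * Real.exp (-R ^ 2 * Real.sin x ^ 2)
noncomputable def FF (x : ℝ) : ℝ := gg R x * erfc (-(R * Real.cos x))

lemma continuous_gg : Continuous (gg R) := by unfold gg; fun_prop
lemma continuous_FF : Continuous (FF R) := by
  unfold FF
  exact (continuous_gg R).mul (continuous_erfc.comp (by fun_prop))

lemma int_FF_eq_int_gg (a b c : ℝ) (hab : c - b = a) (hrefl : ∀ x, gg R (c - x) = gg R x)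
    (hcos : ∀ x, Real.cos (c - x) = -Real.cos x) :
    (∫ x in a..b, FF R x) = ∫ x in a..b, gg R x := by
  have hba : c - a = b := by rw [← hab]; ring
  have h := intervalIntegral.integral_comp_sub_left (a := a) (b := b) (FF R) c
  rw [hab, hba] at h
  have h2 : (∫ x in a..b, (FF R (c - x) + FF R x)) = ∫ x in a..b, 2 * gg R x := by
    apply intervalIntegral.integral_congr
    intro x _
    have h4 := erfc_add_erfc_neg (R * Real.cos x)
    show gg R (c - x) * erfc (-(R * Real.cos (c - x))) + gg R x * erfc (-(R * Real.cos x)) = 2 * gg R x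
    rw [hrefl, hcos]
    rw [show -(R * -Real.cos x) = R * Real.cos x by ring]
    linear_combination gg R x * h4
  have hi1 : IntervalIntegrable (fun x => FF R (c - x)) volume a b :=
    ((continuous_FF R).comp (continuous_const.sub continuous_id)).intervalIntegrable a b
  have hi2 : IntervalIntegrable (FF R) volume a b := (continuous_FF R).intervalIntegrable a b
  rw [intervalIntegral.integral_add hi1 hi2, h] at h2
  have h3 : (∫ x in a..b, 2 * gg R x) = 2 * ∫ x in a..b, gg R x := by
    rw [intervalIntegral.integral_const_mul]
  linarith [h2, h3.symm ▸ h2]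

end main

section main2
variable (R : ℝ)

lemma gg_neg (x : ℝ) : gg R (-x) = gg R x := by
  unfold gg; simp [neg_sq]

lemma gg_pi_sub (x : ℝ) : gg R (π - x) = gg R x := by
  unfold gg; rw [Real.cos_pi_sub, Real.sin_pi_sub, neg_sq]

lemma gg_neg_pi_sub (x : ℝ) : gg R (-π - x) = gg R x := by
  unfold gg
  rw [show (-π - x : ℝ) = -(π + x) by ring, Real.cos_neg, Real.sin_neg, neg_sq]
  simp [Real.cos_add, Real.sin_add]

lemma cos_neg_pi_sub (x : ℝ) : Real.cos (-π - x) = -Real.cos x := by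
  rw [show (-π - x : ℝ) = -(π + x) by ring, Real.cos_neg]
  simp [Real.cos_add]

end main2

section main3
variable (R : ℝ)

lemma int_gg_full : (∫ x in (-π)..π, gg R x) = 4 * ∫ x in (0:ℝ)..(π/2), gg R x := by
  have hgi : ∀ a b : ℝ, IntervalIntegrable (gg R) volume a b :=
    fun a b => (continuous_gg R).intervalIntegrable a b
  have hsplit : (∫ x in (-π)..π, gg R x) = (∫ x in (-π)..(0:ℝ), gg R x) + ∫ x in (0:ℝ)..π, gg R x :=
    (intervalIntegral.integral_add_adjacent_intervals (hgi _ _) (hgi _ _)).symm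
  have hneg : (∫ x in (-π)..(0:ℝ), gg R x) = ∫ x in (0:ℝ)..π, gg R x := by
    have h := intervalIntegral.integral_comp_neg (a := (0:ℝ)) (b := π) (gg R)
    simp only [gg_neg, neg_zero] at h
    exact h.symm
  have hsplit2 : (∫ x in (0:ℝ)..π, gg R x)
      = (∫ x in (0:ℝ)..(π/2), gg R x) + ∫ x in (π/2)..π, gg R x :=
    (intervalIntegral.integral_add_adjacent_intervals (hgi _ _) (hgi _ _)).symm
  have hrefl : (∫ x in (π/2)..π, gg R x) = ∫ x in (0:ℝ)..(π/2), gg R x := by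
    have h := intervalIntegral.integral_comp_sub_left (a := π/2) (b := π) (gg R) π
    simp only [gg_pi_sub, sub_self] at h
    rw [show π - π/2 = π/2 by ring] at h
    exact h
  rw [hsplit, hneg, hsplit2, hrefl]; ring

lemma int_gg_quarter : (∫ x in (0:ℝ)..(π/2), gg R x)
    = ∫ s in (0:ℝ)..1, Real.sqrt (1 - s^2) * Real.exp (-R^2 * s^2) := by
  have hcont : Continuous (fun s : ℝ => Real.sqrt (1 - s^2) * Real.exp (-R^2 * s^2)) := by
    fun_prop
  have h1 : (∫ x in (0:ℝ)..(π/2), gg R x)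
      = ∫ x in (0:ℝ)..(π/2), Real.cos x • ((fun s : ℝ => Real.sqrt (1 - s^2) * Real.exp (-R^2 * s^2)) ∘ Real.sin) x := by
    apply intervalIntegral.integral_congr
    intro x hx
    rw [Set.uIcc_of_le (by positivity)] at hx
    have hcos : 0 ≤ Real.cos x :=
      Real.cos_nonneg_of_mem_Icc ⟨by linarith [hx.1, Real.pi_pos], hx.2⟩
    have hs : Real.sqrt (1 - Real.sin x ^ 2) = Real.cos x := by
      rw [← Real.cos_sq']
      exact Real.sqrt_sq hcos
    show gg R x = Real.cos x • (Real.sqrt (1 - Real.sin x ^ 2) * Real.exp (-R^2 * Real.sin x ^ 2))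
    rw [hs]; unfold gg; rw [smul_eq_mul]; ring
  rw [h1, intervalIntegral.integral_comp_smul_deriv (fun x _ => Real.hasDerivAt_sin x)
    Real.continuous_cos.continuousOn hcont]
  norm_num

lemma int_sq_gauss (hR : 0 < R) : (∫ s in (0:ℝ)..1, s^2 * Real.exp (-R^2 * s^2))
    = (∫ s in (0:ℝ)..1, Real.exp (-R^2 * s^2)) / (2*R^2) - Real.exp (-R^2) / (2*R^2) := by
  have hR2 : (0:ℝ) < 2*R^2 := by positivity
  have hd : ∀ s ∈ Set.uIcc (0:ℝ) 1, HasDerivAt (fun s : ℝ => -s * Real.exp (-R^2 * s^2) / (2*R^2))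
      (s^2 * Real.exp (-R^2 * s^2) - Real.exp (-R^2 * s^2) / (2*R^2)) s := by
    intro s _
    have h1 : HasDerivAt (fun s : ℝ => -R^2 * s^2) (-R^2 * (2*s)) s := by
      simpa using (hasDerivAt_pow 2 s).const_mul (-R^2)
    have h2 := h1.exp
    have h3 := ((hasDerivAt_id s).neg.mul h2).div_const (2*R^2)
    refine h3.congr_deriv ?_
    simp only [Pi.neg_apply, id_eq]
    field_simp
    ring
  have hc1 : Continuous (fun s : ℝ => s^2 * Real.exp (-R^2 * s^2)) := by fun_prop
  have hc2 : Continuous (fun s : ℝ => Real.exp (-R^2 * s^2) / (2*R^2)) := by fun_prop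
  have h := intervalIntegral.integral_eq_sub_of_hasDerivAt hd
    ((hc1.sub hc2).intervalIntegrable 0 1)
  rw [intervalIntegral.integral_sub (hc1.intervalIntegrable 0 1) (hc2.intervalIntegrable 0 1),
    intervalIntegral.integral_div] at h
  have h1 : (-1 : ℝ) * Real.exp (-R^2*1^2) / (2*R^2) - -0 * Real.exp (-R^2*0^2) / (2*R^2)
      = -Real.exp (-R^2) / (2*R^2) := by norm_num
  linear_combination h + h1

lemma G_lb (hR : 0 < R) : (∫ s in (0:ℝ)..1, Real.exp (-R^2 * s^2))
    ≥ Real.sqrt π / (2*R) - Real.exp (-R^2) / (2*R^2) := by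
  have hb : (0:ℝ) < R^2 := by positivity
  have hIoi : ∫ s in Set.Ioi (0:ℝ), Real.exp (-R^2 * s^2) = Real.sqrt π / (2*R) := by
    rw [integral_gaussian_Ioi, Real.sqrt_div Real.pi_pos.le, Real.sqrt_sq hR.le]
    ring
  have hsplit : ∫ s in Set.Ioi (0:ℝ), Real.exp (-R^2 * s^2)
      = (∫ s in (0:ℝ)..1, Real.exp (-R^2 * s^2)) + ∫ s in Set.Ioi (1:ℝ), Real.exp (-R^2 * s^2) := by
    rw [intervalIntegral.integral_of_le zero_le_one,
      ← MeasureTheory.setIntegral_union (Set.Ioc_disjoint_Ioi le_rfl) measurableSet_Ioi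
        ((integrable_exp_neg_mul_sq hb).integrableOn) ((integrable_exp_neg_mul_sq hb).integrableOn),
      Set.Ioc_union_Ioi_eq_Ioi zero_le_one]
  have htail_val : ∫ s in Set.Ioi (1:ℝ), s * Real.exp (-R^2 * s^2) = Real.exp (-R^2) / (2*R^2) := by
    have hderiv : ∀ x ∈ Set.Ici (1:ℝ), HasDerivAt (fun s : ℝ => -Real.exp (-R^2 * s^2) / (2*R^2))
        (x * Real.exp (-R^2 * x^2)) x := by
      intro x _
      have h1 : HasDerivAt (fun s : ℝ => -R^2 * s^2) (-R^2 * (2*x)) x := by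
        simpa using (hasDerivAt_pow 2 x).const_mul (-R^2)
      have h2 := (h1.exp.neg.div_const (2*R^2))
      refine h2.congr_deriv ?_
      field_simp
    have hlim : Filter.Tendsto (fun s : ℝ => -Real.exp (-R^2 * s^2) / (2*R^2))
        Filter.atTop (nhds 0) := by
      have h1 : Filter.Tendsto (fun s : ℝ => -R^2 * s^2) Filter.atTop Filter.atBot :=
        (Filter.tendsto_pow_atTop two_ne_zero).const_mul_atTop_of_neg (neg_lt_zero.mpr hb)
      have h2 := ((Real.tendsto_exp_atBot.comp h1).neg.div_const (2*R^2))
      simpa using h2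
    have := MeasureTheory.integral_Ioi_of_hasDerivAt_of_tendsto' hderiv
      ((integrable_mul_exp_neg_mul_sq hb).integrableOn) hlim
    rw [this]
    norm_num
    ring
  have htail_le : ∫ s in Set.Ioi (1:ℝ), Real.exp (-R^2 * s^2)
      ≤ ∫ s in Set.Ioi (1:ℝ), s * Real.exp (-R^2 * s^2) := by
    apply MeasureTheory.setIntegral_mono_on ((integrable_exp_neg_mul_sq hb).integrableOn)
      ((integrable_mul_exp_neg_mul_sq hb).integrableOn) measurableSet_Ioi
    intro s hs
    exact le_mul_of_one_le_left (Real.exp_pos _).le (le_of_lt hs)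
  linarith [hsplit, htail_le, htail_val, hIoi]

end main3

lemma final_arith (R s E G I2 : ℝ) (hR : 1 ≤ R) (hs : 0 < s) (hE : 0 < E)
    (hG : G ≥ s/(2*R) - E/(2*R^2))
    (hInt : I2 ≥ G - (G/(2*R^2) - E/(2*R^2))) :
    R / (2*s) * (4*I2) ≥ 1 - 1/R^2 := by
  have hR0 : (0:ℝ) < R := lt_of_lt_of_le one_pos hR
  have hR2 : (1:ℝ) ≤ R^2 := by nlinarith
  have c1 : (0:ℝ) ≤ 1 - 1/(2*R^2) := by
    have h2 : 1/(2*R^2) ≤ 1/2 := by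
      apply one_div_le_one_div_of_le <;> nlinarith
    linarith
  have e1 : G - (G/(2*R^2) - E/(2*R^2)) = (1 - 1/(2*R^2)) * G + E/(2*R^2) := by
    field_simp
    ring
  have key1 : I2 ≥ (1 - 1/(2*R^2)) * (s/(2*R) - E/(2*R^2)) + E/(2*R^2) := by
    have e2 : (1 - 1/(2*R^2)) * (s/(2*R) - E/(2*R^2)) ≤ (1 - 1/(2*R^2)) * G :=
      mul_le_mul_of_nonneg_left hG c1
    rw [e1] at hInt
    linarith
  have key2 : R / (2*s) * (4 * ((1 - 1/(2*R^2)) * (s/(2*R) - E/(2*R^2)) + E/(2*R^2)))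
      = 1 - 1/(2*R^2) + E/(2*s*R^3) := by
    field_simp
    ring
  have key3 : R / (2*s) * (4 * ((1 - 1/(2*R^2)) * (s/(2*R) - E/(2*R^2)) + E/(2*R^2)))
      ≤ R / (2*s) * (4*I2) := by
    apply mul_le_mul_of_nonneg_left (by linarith) (by positivity)
  have k4 : (0:ℝ) ≤ E/(2*s*R^3) := by positivity
  have k5 : 1/(2*R^2) ≤ 1/R^2 := by
    rw [div_le_div_iff₀ (by positivity) (by positivity)]
    nlinarith
  linarith [key2 ▸ key3]

/-- Lemma 1 of the paper: for the phase-error density `p_Φ` of an AWGN channel with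
amplitude `R > 0`, we have `E[cos Φ] ≥ 1 - 1/R²` and `E[sin Φ] = 0`. -/
theorem ecos_phase_ge_and_esin_eq_zero (R : ℝ) (hR : 0 < R)
    (pΦ : ℝ → ℝ)
    (hpΦ : ∀ φ : ℝ, pΦ φ =
      (1 / (2 * π)) * Real.exp (-R ^ 2) +
      (R / Real.sqrt (4 * π)) * Real.cos φ * Real.exp (-R ^ 2 * Real.sin φ ^ 2) *
        erfc (-(R * Real.cos φ))) :
    (∫ φ in (-π)..π, Real.cos φ * pΦ φ) ≥ 1 - 1 / R ^ 2 ∧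
    (∫ φ in (-π)..π, Real.sin φ * pΦ φ) = 0 := by
  constructor
  · -- cosine part
    have hsq : (0:ℝ) < Real.sqrt π := Real.sqrt_pos.mpr Real.pi_pos
    have hK : Real.sqrt (4 * π) = 2 * Real.sqrt π := by
      rw [show (4:ℝ) * π = 2^2 * π by ring, Real.sqrt_mul (by positivity),
        Real.sqrt_sq (by norm_num : (0:ℝ) ≤ 2)]
    have hx : ∀ φ : ℝ, Real.cos φ * pΦ φ
        = (1 / (2 * π)) * Real.exp (-R ^ 2) * Real.cos φ + (R / Real.sqrt (4 * π)) * FF R φ := by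
      intro φ; rw [hpΦ]; unfold FF gg; ring
    have hIcos : (∫ φ in (-π)..π, Real.cos φ * pΦ φ)
        = (1 / (2 * π)) * Real.exp (-R ^ 2) * (∫ φ in (-π)..π, Real.cos φ)
          + (R / Real.sqrt (4 * π)) * ∫ φ in (-π)..π, FF R φ := by
      rw [intervalIntegral.integral_congr (g := fun φ => (1 / (2 * π)) * Real.exp (-R ^ 2) * Real.cos φ
        + (R / Real.sqrt (4 * π)) * FF R φ) (fun φ _ => hx φ)]
      rw [intervalIntegral.integral_add (f := fun φ => (1 / (2 * π)) * Real.exp (-R ^ 2) * Real.cos φ)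
        (g := fun φ => (R / Real.sqrt (4 * π)) * FF R φ)
        (((continuous_const.mul Real.continuous_cos)).intervalIntegrable _ _)
        ((continuous_const.mul (continuous_FF R)).intervalIntegrable _ _),
        intervalIntegral.integral_const_mul, intervalIntegral.integral_const_mul]
    have hcos0 : (∫ φ in (-π)..π, Real.cos φ) = 0 := by
      rw [integral_cos]; simp
    have hFg : (∫ φ in (-π)..π, FF R φ) = ∫ φ in (-π)..π, gg R φ := by
      have h1 := int_FF_eq_int_gg R (-π) 0 (-π) (by ring) (gg_neg_pi_sub R) (cos_neg_pi_sub)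
      have h2 := int_FF_eq_int_gg R 0 π π (by ring) (gg_pi_sub R) Real.cos_pi_sub
      have hFadd := intervalIntegral.integral_add_adjacent_intervals (μ := volume)
        ((continuous_FF R).intervalIntegrable (-π) 0) ((continuous_FF R).intervalIntegrable 0 π)
      have hgadd := intervalIntegral.integral_add_adjacent_intervals (μ := volume)
        ((continuous_gg R).intervalIntegrable (-π) 0) ((continuous_gg R).intervalIntegrable 0 π)
      rw [← hFadd, ← hgadd, h1, h2]
    rw [hIcos, hcos0, mul_zero, zero_add, hFg, int_gg_full, int_gg_quarter, hK]
    set I2 := ∫ s in (0:ℝ)..1, Real.sqrt (1 - s^2) * Real.exp (-R^2 * s^2) with hI2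
    by_cases hR1 : 1 ≤ R
    · set G := ∫ s in (0:ℝ)..1, Real.exp (-R^2 * s^2) with hG
      have hlow : (∫ s in (0:ℝ)..1, (1 - s^2) * Real.exp (-R^2 * s^2)) ≤ I2 := by
        apply intervalIntegral.integral_mono_on zero_le_one
          ((by fun_prop : Continuous fun s : ℝ => (1 - s^2) * Real.exp (-R^2 * s^2)).intervalIntegrable _ _)
          ((by fun_prop : Continuous fun s : ℝ => Real.sqrt (1 - s^2) * Real.exp (-R^2 * s^2)).intervalIntegrable _ _)
        intro t ht
        have h01 : 0 ≤ 1 - t^2 := by nlinarith [ht.1, ht.2]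
        have hle1 : 1 - t^2 ≤ 1 := by nlinarith [sq_nonneg t]
        have hsqv := Real.sq_sqrt h01
        have hnn := Real.sqrt_nonneg (1 - t^2)
        have hsl : 1 - t^2 ≤ Real.sqrt (1 - t^2) := by nlinarith
        exact mul_le_mul_of_nonneg_right hsl (Real.exp_pos _).le
      have hval : (∫ s in (0:ℝ)..1, (1 - s^2) * Real.exp (-R^2 * s^2))
          = G - (G/(2*R^2) - Real.exp (-R^2)/(2*R^2)) := by
        have hcongr : ∀ s ∈ Set.uIcc (0:ℝ) 1, (fun s : ℝ => (1 - s^2) * Real.exp (-R^2*s^2)) s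
            = (fun s : ℝ => Real.exp (-R^2*s^2) - s^2 * Real.exp (-R^2*s^2)) s := fun s _ => by ring
        rw [intervalIntegral.integral_congr hcongr,
          intervalIntegral.integral_sub
            ((by fun_prop : Continuous fun s : ℝ => Real.exp (-R^2*s^2)).intervalIntegrable _ _)
            ((by fun_prop : Continuous fun s : ℝ => s^2 * Real.exp (-R^2*s^2)).intervalIntegrable _ _),
          int_sq_gauss R hR]
      have hGlb := G_lb R hR
      have := final_arith R (Real.sqrt π) (Real.exp (-R^2)) G I2 hR1 hsq (Real.exp_pos _)
        hGlb (by linarith)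
      exact this
    · push_neg at hR1
      have hI2nn : 0 ≤ I2 := by
        apply intervalIntegral.integral_nonneg zero_le_one
        intro t _
        positivity
      have hlhs : 0 ≤ R / (2 * Real.sqrt π) * (4 * I2) := by positivity
      have hR2 : R^2 < 1 := by nlinarith
      have h1 : 1 < 1/R^2 := by
        rw [lt_div_iff₀ (by positivity)]
        linarith
      linarith
  · -- sine part
    have hodd : ∀ φ : ℝ, Real.sin (-φ) * pΦ (-φ) = -(Real.sin φ * pΦ φ) := by
      intro φ
      rw [hpΦ, hpΦ]
      simp only [Real.sin_neg, Real.cos_neg, neg_sq]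
      ring
    have h := intervalIntegral.integral_comp_neg (a := -π) (b := π)
      (fun φ => Real.sin φ * pΦ φ)
    simp only [neg_neg] at h
    simp_rw [hodd] at h
    rw [intervalIntegral.integral_neg] at h
    linarith
end

section
/- For every real number a with a > 0 and a ≠ 1, the iterated integral over the simplex 0 ≤ u₁ ≤ u₂ ≤ u₃ ≤ u₄ ≤ 1 of a^{u₄ − u₃ + u₂ − u₁}, namely K₁(a) := ∫_0^1 ∫_{u₁}^1 ∫_{u₂}^1 ∫_{u₃}^1 a^{u₄ − u₃ + u₂ − u₁} du₄ du₃ du₂ du₁, equals (6 − 6a + 4 log a + 2a log a + (log a)²)/(2 (log a)⁴). -/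
open Real MeasureTheory intervalIntegral

private lemma master (m c α β r s b e : ℝ) (hm : m ≠ 0)
    (f : ℝ → ℝ)
    (hf : ∀ x, f x = (α + β*x) * Real.exp (m*x + c) + r + s*x) :
    ∫ x in b..e, f x =
      (((α - β/m)/m + (β/m)*e)*Real.exp (m*e+c) + r*e + s*e^2/2)
    - (((α - β/m)/m + (β/m)*b)*Real.exp (m*b+c) + r*b + s*b^2/2) := by
  have hcont : Continuous f := by
    have : f = fun x => (α + β*x) * Real.exp (m*x + c) + r + s*x := funext hf
    rw [this]; fun_prop
  apply intervalIntegral.integral_eq_sub_of_hasDerivAt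
  · intro x _
    have h1 : HasDerivAt (fun y : ℝ => m*y + c) m x := by
      simpa using ((hasDerivAt_id x).const_mul m).add_const c
    have h2 : HasDerivAt (fun y : ℝ => Real.exp (m*y + c)) (Real.exp (m*x+c) * m) x :=
      h1.exp
    have h3 : HasDerivAt (fun y : ℝ => (α - β/m)/m + (β/m)*y) (β/m) x := by
      simpa using (((hasDerivAt_id x).const_mul (β/m)).const_add ((α - β/m)/m))
    have h4 := h3.mul h2
    have h5 : HasDerivAt (fun y : ℝ => r*y) r x := by
      simpa using (hasDerivAt_id x).const_mul r
    have h6 : HasDerivAt (fun y : ℝ => s*y^2/2) (s*x) x := by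
      have := ((hasDerivAt_pow 2 x).const_mul s).div_const 2
      simpa using this.congr_deriv (by ring)
    have h7 := (h4.add h5).add h6
    convert h7 using 1
    · rfl
    rw [hf x]; field_simp; ring
  · exact hcont.intervalIntegrable b e

/-- Appendix A.3 of the paper: the ordered-simplex integral
`K₁(a) = ∫_0^1 ∫_{u₁}^1 ∫_{u₂}^1 ∫_{u₃}^1 a^{u₄−u₃+u₂−u₁} du₄ du₃ du₂ du₁`
equals `(6 − 6a + 4 log a + 2a log a + (log a)²)/(2 (log a)⁴)`. -/
theorem simplex_integral_K1 (a : ℝ) (ha : 0 < a) (ha1 : a ≠ 1) :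
    (∫ u₁ in (0:ℝ)..1, ∫ u₂ in u₁..1, ∫ u₃ in u₂..1, ∫ u₄ in u₃..1,
        a ^ (u₄ - u₃ + u₂ - u₁)) =
      (6 - 6 * a + 4 * Real.log a + 2 * a * Real.log a + (Real.log a) ^ 2) /
        (2 * (Real.log a) ^ 4) := by
  set L := Real.log a with hLdef
  have hL : L ≠ 0 := by
    simp only [hLdef, ne_eq, Real.log_eq_zero]
    push_neg
    exact ⟨ha.ne', ha1, by nlinarith⟩
  have hexp : Real.exp L = a := Real.exp_log ha
  have hnL : -L ≠ 0 := neg_ne_zero.mpr hL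
  have h4 : ∀ u₃ u₂ u₁ : ℝ, (∫ u₄ in u₃..1, Real.exp (L*(u₄ - u₃ + u₂ - u₁))) =
      (Real.exp (L*(1 - u₃ + u₂ - u₁)) - Real.exp (L*(u₂ - u₁)))/L := by
    intro u₃ u₂ u₁
    rw [master L (L*(u₂ - u₁ - u₃)) 1 0 0 0 u₃ 1 hL _
      (fun x => by rw [show L*x + L*(u₂ - u₁ - u₃) = L*(x - u₃ + u₂ - u₁) by ring]; ring)]
    rw [show L*1 + L*(u₂ - u₁ - u₃) = L*(1 - u₃ + u₂ - u₁) by ring,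
        show L*u₃ + L*(u₂ - u₁ - u₃) = L*(u₂ - u₁) by ring]
    field_simp
    try ring
  have h3 : ∀ u₂ u₁ : ℝ, (∫ u₃ in u₂..1,
        (Real.exp (L*(1 - u₃ + u₂ - u₁)) - Real.exp (L*(u₂ - u₁)))/L) =
      (Real.exp (L*(1 - u₁)) - Real.exp (L*(u₂ - u₁)))/L^2
        - (1 - u₂)*Real.exp (L*(u₂ - u₁))/L := by
    intro u₂ u₁
    rw [master (-L) (L*(1 + u₂ - u₁)) (1/L) 0 (-(Real.exp (L*(u₂ - u₁))/L)) 0 u₂ 1 hnL _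
      (fun x => by rw [show -L*x + L*(1 + u₂ - u₁) = L*(1 - x + u₂ - u₁) by ring]; ring)]
    rw [show -L*1 + L*(1 + u₂ - u₁) = L*(u₂ - u₁) by ring,
        show -L*u₂ + L*(1 + u₂ - u₁) = L*(1 - u₁) by ring]
    field_simp
    ring
  have h2 : ∀ u₁ : ℝ, (∫ u₂ in u₁..1,
        ((Real.exp (L*(1 - u₁)) - Real.exp (L*(u₂ - u₁)))/L^2
          - (1 - u₂)*Real.exp (L*(u₂ - u₁))/L)) =
      ((1 - u₁)*Real.exp (L*(1 - u₁)) + (1 - u₁))/L^2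
        - 2*(Real.exp (L*(1 - u₁)) - 1)/L^3 := by
    intro u₁
    rw [master L (-(L*u₁)) (-(1/L^2) - 1/L) (1/L) (Real.exp (L*(1 - u₁))/L^2) 0 u₁ 1 hL _
      (fun x => by rw [show L*x + -(L*u₁) = L*(x - u₁) by ring]; ring)]
    rw [show L*1 + -(L*u₁) = L*(1 - u₁) by ring,
        show L*u₁ + -(L*u₁) = L*0 by ring]
    simp only [mul_zero, Real.exp_zero]
    field_simp
    ring
  have h1 : (∫ u₁ in (0:ℝ)..1,
        (((1 - u₁)*Real.exp (L*(1 - u₁)) + (1 - u₁))/L^2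
          - 2*(Real.exp (L*(1 - u₁)) - 1)/L^3)) =
      (6 - 6 * a + 4 * L + 2 * a * L + L ^ 2) / (2 * L ^ 4) := by
    rw [master (-L) L (1/L^2 - 2/L^3) (-(1/L^2)) (1/L^2 + 2/L^3) (-(1/L^2)) 0 1 hnL _
      (fun x => by rw [show -L*x + L = L*(1 - x) by ring]; ring)]
    rw [show -L*1 + L = (0:ℝ) by ring, show -L*0 + L = L by ring]
    simp only [Real.exp_zero, hexp]
    field_simp
    ring
  simp only [Real.rpow_def_of_pos ha, ← hLdef]
  simp only [h4, h3, h2, h1]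
end

section
/- For every real number a with a > 0 and a ≠ 1, the iterated integral over the region 0 ≤ u₁ ≤ u₃ ≤ u₂ ≤ u₄ ≤ 1 of a^{u₄ − 3u₃ + 3u₂ − u₁}, namely K₂(a) := ∫_0^1 ∫_{u₁}^1 ∫_{u₃}^1 ∫_{u₂}^1 a^{u₄ − 3u₃ + 3u₂ − u₁} du₄ du₂ du₃ du₁, equals (−81 + 80a + a⁴ − 36 log a − 48 a log a)/(144 (log a)⁴). -/
open Real MeasureTheory intervalIntegral

lemma Iexp (c : ℝ) (hc : c ≠ 0) (d p q : ℝ) :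
    ∫ x in p..q, Real.exp (c * x + d) =
      (Real.exp (c * q + d) - Real.exp (c * p + d)) / c := by
  have key : ∀ x ∈ Set.uIcc p q, HasDerivAt (fun y => Real.exp (c * y + d) / c)
      (Real.exp (c * x + d)) x := by
    intro x _
    have h1 : HasDerivAt (fun y : ℝ => c * y + d) c x := by
      simpa using ((hasDerivAt_id x).const_mul c).add_const d
    have h2 := (h1.exp).div_const c
    simpa [mul_div_assoc, div_self hc] using h2
  rw [integral_eq_sub_of_hasDerivAt key
    ((by continuity : Continuous fun x => Real.exp (c * x + d)).intervalIntegrable p q)]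
  ring

lemma IexpLin (c : ℝ) (hc : c ≠ 0) (p q : ℝ) :
    ∫ x in p..q, (1 - x) * Real.exp (c - c * x) =
      (-((1 - q) / c - 1 / c ^ 2) * Real.exp (c - c * q)) -
        (-((1 - p) / c - 1 / c ^ 2) * Real.exp (c - c * p)) := by
  have key : ∀ x ∈ Set.uIcc p q, HasDerivAt
      (fun y => -((1 - y) / c - 1 / c ^ 2) * Real.exp (c - c * y))
      ((1 - x) * Real.exp (c - c * x)) x := by
    intro x _
    have h1 : HasDerivAt (fun y : ℝ => (1 : ℝ) - y) (-1) x := by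
      simpa using (hasDerivAt_id x).const_sub 1
    have h1' : HasDerivAt (fun y : ℝ => c - c * y) (-c) x := by
      simpa using ((hasDerivAt_id x).const_mul c).const_sub c
    have hexp := h1'.exp
    have hA : HasDerivAt (fun y : ℝ => -((1 - y) / c - 1 / c ^ 2)) (1 / c) x := by
      have := ((h1.div_const c).sub_const (1 / c ^ 2)).neg
      exact this.congr_deriv (by ring)
    have := hA.mul hexp
    refine this.congr_deriv ?_
    field_simp
    ring
  rw [integral_eq_sub_of_hasDerivAt key
    ((by continuity :
      Continuous fun x => (1 - x) * Real.exp (c - c * x)).intervalIntegrable p q)]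

set_option maxHeartbeats 1000000 in
/-- Appendix A.3 of the paper: the ordered-region integral
`K₂(a) = ∫_0^1 ∫_{u₁}^1 ∫_{u₃}^1 ∫_{u₂}^1 a^{u₄−3u₃+3u₂−u₁} du₄ du₂ du₃ du₁`
equals `(−81 + 80a + a⁴ − 36 log a − 48a log a)/(144 (log a)⁴)`. -/
theorem simplex_integral_K2 (a : ℝ) (ha : 0 < a) (ha1 : a ≠ 1) :
    (∫ u₁ in (0:ℝ)..1, ∫ u₃ in u₁..1, ∫ u₂ in u₃..1, ∫ u₄ in u₂..1,
        a ^ (u₄ - 3 * u₃ + 3 * u₂ - u₁)) =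
      (-81 + 80 * a + a ^ 4 - 36 * Real.log a - 48 * a * Real.log a) /
        (144 * (Real.log a) ^ 4) := by
  have hL : Real.log a ≠ 0 := by
    intro h
    rcases Real.log_eq_zero.mp h with h' | h' | h' <;> [linarith; exact ha1 h'; linarith]
  set L := Real.log a with hLdef
  simp only [Real.rpow_def_of_pos ha, ← hLdef]
  have h4 : ∀ u₁ u₃ u₂ : ℝ,
      (∫ u₄ in u₂..1, Real.exp (L * (u₄ - 3 * u₃ + 3 * u₂ - u₁))) =
        Real.exp (L * (1 - 3 * u₃ + 3 * u₂ - u₁)) / L -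
          Real.exp (L * (4 * u₂ - 3 * u₃ - u₁)) / L := by
    intro u₁ u₃ u₂
    have e : ∀ x : ℝ, L * (x - 3 * u₃ + 3 * u₂ - u₁) =
        L * x + L * (-3 * u₃ + 3 * u₂ - u₁) := fun _ => by ring
    simp only [e]
    rw [Iexp L hL,
      show L * 1 + L * (-3 * u₃ + 3 * u₂ - u₁) = L * (1 - 3 * u₃ + 3 * u₂ - u₁) from by ring,
      show L * u₂ + L * (-3 * u₃ + 3 * u₂ - u₁) = L * (4 * u₂ - 3 * u₃ - u₁) from by ring]
    ring
  simp only [h4]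
  have h2 : ∀ u₁ u₃ : ℝ,
      (∫ u₂ in u₃..1, (Real.exp (L * (1 - 3 * u₃ + 3 * u₂ - u₁)) / L -
          Real.exp (L * (4 * u₂ - 3 * u₃ - u₁)) / L)) =
        Real.exp (L * (4 - 3 * u₃ - u₁)) / (12 * L ^ 2) -
          Real.exp (L - L * u₁) / (3 * L ^ 2) +
          Real.exp (L * (u₃ - u₁)) / (4 * L ^ 2) := by
    intro u₁ u₃
    have e1 : ∀ x : ℝ, L * (1 - 3 * u₃ + 3 * x - u₁) =
        3 * L * x + (L - 3 * L * u₃ - L * u₁) := fun _ => by ring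
    have e2 : ∀ x : ℝ, L * (4 * x - 3 * u₃ - u₁) =
        4 * L * x + (-3 * L * u₃ - L * u₁) := fun _ => by ring
    simp only [e1, e2]
    rw [integral_sub ((by continuity : Continuous fun x : ℝ =>
          Real.exp (3 * L * x + (L - 3 * L * u₃ - L * u₁)) / L).intervalIntegrable _ _)
        ((by continuity : Continuous fun x : ℝ =>
          Real.exp (4 * L * x + (-3 * L * u₃ - L * u₁)) / L).intervalIntegrable _ _),
      intervalIntegral.integral_div, intervalIntegral.integral_div,
      Iexp (3 * L) (mul_ne_zero three_ne_zero hL),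
      Iexp (4 * L) (mul_ne_zero four_ne_zero hL),
      show 3 * L * 1 + (L - 3 * L * u₃ - L * u₁) = L * (4 - 3 * u₃ - u₁) from by ring,
      show 3 * L * u₃ + (L - 3 * L * u₃ - L * u₁) = L - L * u₁ from by ring,
      show 4 * L * 1 + (-3 * L * u₃ - L * u₁) = L * (4 - 3 * u₃ - u₁) from by ring,
      show 4 * L * u₃ + (-3 * L * u₃ - L * u₁) = L * (u₃ - u₁) from by ring]
    field_simp
    ring
  simp only [h2]
  have h3 : ∀ u₁ : ℝ,
      (∫ u₃ in u₁..1, (Real.exp (L * (4 - 3 * u₃ - u₁)) / (12 * L ^ 2) -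
          Real.exp (L - L * u₁) / (3 * L ^ 2) +
          Real.exp (L * (u₃ - u₁)) / (4 * L ^ 2))) =
        Real.exp (4 * L - 4 * L * u₁) / (36 * L ^ 3) +
          2 * Real.exp (L - L * u₁) / (9 * L ^ 3) -
          (1 - u₁) * Real.exp (L - L * u₁) / (3 * L ^ 2) - 1 / (4 * L ^ 3) := by
    intro u₁
    have e1 : ∀ x : ℝ, L * (4 - 3 * x - u₁) = -3 * L * x + (4 * L - L * u₁) := fun _ => by ring
    have e3 : ∀ x : ℝ, L * (x - u₁) = L * x + -(L * u₁) := fun _ => by ring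
    simp only [e1, e3]
    rw [integral_add
        (((by continuity : Continuous fun x : ℝ =>
            Real.exp (-3 * L * x + (4 * L - L * u₁)) / (12 * L ^ 2)).intervalIntegrable _ _).sub
          ((by continuity : Continuous fun _ : ℝ =>
            Real.exp (L - L * u₁) / (3 * L ^ 2)).intervalIntegrable _ _))
        ((by continuity : Continuous fun x : ℝ =>
            Real.exp (L * x + -(L * u₁)) / (4 * L ^ 2)).intervalIntegrable _ _),
      integral_sub ((by continuity : Continuous fun x : ℝ =>
            Real.exp (-3 * L * x + (4 * L - L * u₁)) / (12 * L ^ 2)).intervalIntegrable _ _)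
        ((by continuity : Continuous fun _ : ℝ =>
            Real.exp (L - L * u₁) / (3 * L ^ 2)).intervalIntegrable _ _),
      intervalIntegral.integral_div, intervalIntegral.integral_div,
      intervalIntegral.integral_const, intervalIntegral.integral_div,
      Iexp (-3 * L) (by simpa using hL), Iexp L hL,
      show -3 * L * 1 + (4 * L - L * u₁) = L - L * u₁ from by ring,
      show -3 * L * u₁ + (4 * L - L * u₁) = 4 * L - 4 * L * u₁ from by ring,
      show L * 1 + -(L * u₁) = L - L * u₁ from by ring,
      show L * u₁ + -(L * u₁) = 0 from by ring, Real.exp_zero, smul_eq_mul]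
    field_simp
    ring
  simp only [h3]
  have ea : Real.exp L = a := Real.exp_log ha
  have ea4 : Real.exp (4 * L) = a ^ 4 := by
    rw [show (4 : ℝ) * L = L + (L + (L + L)) from by ring, Real.exp_add, Real.exp_add,
      Real.exp_add, ea]; ring
  have cA : Continuous fun x : ℝ => Real.exp (4 * L - 4 * L * x) / (36 * L ^ 3) := by continuity
  have cB : Continuous fun x : ℝ => 2 * Real.exp (L - L * x) / (9 * L ^ 3) := by continuity
  have cC : Continuous fun x : ℝ => (1 - x) * Real.exp (L - L * x) / (3 * L ^ 2) := by
    continuity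
  have cD : Continuous fun _ : ℝ => (1 : ℝ) / (4 * L ^ 3) := continuous_const
  rw [integral_sub (((cA.intervalIntegrable _ _).add (cB.intervalIntegrable _ _)).sub
        (cC.intervalIntegrable _ _)) (cD.intervalIntegrable _ _),
    integral_sub ((cA.intervalIntegrable _ _).add (cB.intervalIntegrable _ _))
      (cC.intervalIntegrable _ _),
    integral_add (cA.intervalIntegrable _ _) (cB.intervalIntegrable _ _),
    intervalIntegral.integral_div, intervalIntegral.integral_div,
    intervalIntegral.integral_div, intervalIntegral.integral_const, intervalIntegral.integral_const_mul,
    IexpLin L hL 0 1]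
  have e1 : ∀ x : ℝ, 4 * L - 4 * L * x = -4 * L * x + 4 * L := fun _ => by ring
  have e2 : ∀ x : ℝ, L - L * x = -L * x + L := fun _ => by ring
  rw [show (∫ x in (0:ℝ)..1, Real.exp (4 * L - 4 * L * x)) =
      ∫ x in (0:ℝ)..1, Real.exp (-4 * L * x + 4 * L) from by simp only [e1],
    show (∫ x in (0:ℝ)..1, Real.exp (L - L * x)) =
      ∫ x in (0:ℝ)..1, Real.exp (-L * x + L) from by simp only [e2],
    Iexp (-4 * L) (by simpa using hL), Iexp (-L) (by simpa using hL),
    show -4 * L * 1 + 4 * L = 0 from by ring,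
    show -4 * L * 0 + 4 * L = 4 * L from by ring,
    show -L * 1 + L = 0 from by ring,
    show -L * 0 + L = L from by ring,
    show L - L * 1 = 0 from by ring,
    show L - L * 0 = L from by ring,
    Real.exp_zero, ea, ea4, smul_eq_mul]
  field_simp
  ring
end

section
/- The limit as a → 1 (over real a > 0 with a ≠ 1) of (711 − 640a − 72a² + a⁴ + 396 log a + 384 a log a + 72 (log a)²)/(18 (log a)⁶) equals 4/45. -/
open Real Filter Topology

noncomputable def F : ℕ → ℝ → ℝ
  | 0, t => 711 - 640 * Real.exp t - 72 * Real.exp (2*t) + Real.exp (4*t) + 396 * t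
      + 384 * (t * Real.exp t) + 72 * t^2
  | 1, t => 396 - 256 * Real.exp t - 144 * Real.exp (2*t) + 4 * Real.exp (4*t)
      + 384 * (t * Real.exp t) + 144 * t
  | 2, t => 144 + 128 * Real.exp t - 288 * Real.exp (2*t) + 16 * Real.exp (4*t)
      + 384 * (t * Real.exp t)
  | 3, t => 512 * Real.exp t - 576 * Real.exp (2*t) + 64 * Real.exp (4*t) + 384 * (t * Real.exp t)
  | 4, t => 896 * Real.exp t - 1152 * Real.exp (2*t) + 256 * Real.exp (4*t) + 384 * (t * Real.exp t)
  | 5, t => 1280 * Real.exp t - 2304 * Real.exp (2*t) + 1024 * Real.exp (4*t) + 384 * (t * Real.exp t)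
  | _+6, t => 1664 * Real.exp t - 4608 * Real.exp (2*t) + 4096 * Real.exp (4*t) + 384 * (t * Real.exp t)

lemma hasDerivAt_exp2 (t : ℝ) : HasDerivAt (fun x => Real.exp (2*x)) (2 * Real.exp (2*t)) t := by
  simpa [mul_comm] using ((hasDerivAt_id t).const_mul 2).exp

lemma hasDerivAt_exp4 (t : ℝ) : HasDerivAt (fun x => Real.exp (4*x)) (4 * Real.exp (4*t)) t := by
  simpa [mul_comm] using ((hasDerivAt_id t).const_mul 4).exp

lemma hasDerivAt_texp (t : ℝ) :
    HasDerivAt (fun x => x * Real.exp x) (Real.exp t + t * Real.exp t) t := by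
  exact ((hasDerivAt_id' t).mul (Real.hasDerivAt_exp t)).congr_deriv (by simp)

lemma F_deriv0 (t : ℝ) : HasDerivAt (F 0) (F 1 t) t := by
  have h1 := (hasDerivAt_const t (711:ℝ)).sub ((Real.hasDerivAt_exp t).const_mul 640)
  have h2 := h1.sub ((hasDerivAt_exp2 t).const_mul 72)
  have h3 := h2.add (hasDerivAt_exp4 t)
  have h4 := h3.add ((hasDerivAt_id t).const_mul 396)
  have h5 := h4.add ((hasDerivAt_texp t).const_mul 384)
  have h := h5.add (((hasDerivAt_id t).pow 2).const_mul 72)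
  convert h using 1
  · rfl
  · rfl
  · funext x; simp [F]
  · simp [F]; ring

lemma F_deriv1 (t : ℝ) : HasDerivAt (F 1) (F 2 t) t := by
  have h1 := (hasDerivAt_const t (396:ℝ)).sub ((Real.hasDerivAt_exp t).const_mul 256)
  have h2 := h1.sub ((hasDerivAt_exp2 t).const_mul 144)
  have h3 := h2.add ((hasDerivAt_exp4 t).const_mul 4)
  have h4 := h3.add ((hasDerivAt_texp t).const_mul 384)
  have h := h4.add ((hasDerivAt_id t).const_mul 144)
  convert h using 1
  · rfl
  · rfl
  · funext x; simp [F]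
  · simp [F]; ring

lemma F_deriv2 (t : ℝ) : HasDerivAt (F 2) (F 3 t) t := by
  have h := ((((hasDerivAt_const t (144:ℝ)).add ((Real.hasDerivAt_exp t).const_mul 128)).sub
      ((hasDerivAt_exp2 t).const_mul 288)).add ((hasDerivAt_exp4 t).const_mul 16)).add
      ((hasDerivAt_texp t).const_mul 384)
  convert h using 1
  · rfl
  · rfl
  · funext x; simp [F]
  · simp [F]; ring

lemma F_deriv3 (t : ℝ) : HasDerivAt (F 3) (F 4 t) t := by
  have h := ((((Real.hasDerivAt_exp t).const_mul (512:ℝ)).sub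
      ((hasDerivAt_exp2 t).const_mul 576)).add ((hasDerivAt_exp4 t).const_mul 64)).add
      ((hasDerivAt_texp t).const_mul 384)
  convert h using 1
  · rfl
  · rfl
  · funext x; simp [F]
  · simp [F]; ring

lemma F_deriv4 (t : ℝ) : HasDerivAt (F 4) (F 5 t) t := by
  have h := ((((Real.hasDerivAt_exp t).const_mul (896:ℝ)).sub
      ((hasDerivAt_exp2 t).const_mul 1152)).add ((hasDerivAt_exp4 t).const_mul 256)).add
      ((hasDerivAt_texp t).const_mul 384)
  convert h using 1
  · rfl
  · rfl
  · funext x; simp [F]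
  · simp [F]; ring

lemma F_deriv5 (t : ℝ) : HasDerivAt (F 5) (F 6 t) t := by
  have h := ((((Real.hasDerivAt_exp t).const_mul (1280:ℝ)).sub
      ((hasDerivAt_exp2 t).const_mul 2304)).add ((hasDerivAt_exp4 t).const_mul 1024)).add
      ((hasDerivAt_texp t).const_mul 384)
  convert h using 1
  · rfl
  · rfl
  · funext x; simp [F]
  · simp [F]; ring


lemma contF (k : ℕ) : Continuous (F k) := by
  have h2 : Continuous fun t : ℝ => Real.exp (2*t) := by fun_prop
  have h4 : Continuous fun t : ℝ => Real.exp (4*t) := by fun_prop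
  match k with
  | 0 => exact (by fun_prop : Continuous fun t : ℝ => 711 - 640 * Real.exp t - 72 * Real.exp (2*t) + Real.exp (4*t) + 396 * t + 384 * (t * Real.exp t) + 72 * t^2)
  | 1 => exact (by fun_prop : Continuous fun t : ℝ => 396 - 256 * Real.exp t - 144 * Real.exp (2*t) + 4 * Real.exp (4*t) + 384 * (t * Real.exp t) + 144 * t)
  | 2 => exact (by fun_prop : Continuous fun t : ℝ => 144 + 128 * Real.exp t - 288 * Real.exp (2*t) + 16 * Real.exp (4*t) + 384 * (t * Real.exp t))
  | 3 => exact (by fun_prop : Continuous fun t : ℝ => 512 * Real.exp t - 576 * Real.exp (2*t) + 64 * Real.exp (4*t) + 384 * (t * Real.exp t))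
  | 4 => exact (by fun_prop : Continuous fun t : ℝ => 896 * Real.exp t - 1152 * Real.exp (2*t) + 256 * Real.exp (4*t) + 384 * (t * Real.exp t))
  | 5 => exact (by fun_prop : Continuous fun t : ℝ => 1280 * Real.exp t - 2304 * Real.exp (2*t) + 1024 * Real.exp (4*t) + 384 * (t * Real.exp t))
  | (n+6) => exact (by fun_prop : Continuous fun t : ℝ => 1664 * Real.exp t - 4608 * Real.exp (2*t) + 4096 * Real.exp (4*t) + 384 * (t * Real.exp t))

lemma tendstoF (k : ℕ) (y : ℝ) (h : F k 0 = y) : Tendsto (F k) (𝓝[≠] (0:ℝ)) (𝓝 y) :=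
  tendsto_nhdsWithin_of_tendsto_nhds (h ▸ (contF k).tendsto 0)

lemma F0at0 : F 0 0 = 0 := by norm_num [F]
lemma F1at0 : F 1 0 = 0 := by norm_num [F]
lemma F2at0 : F 2 0 = 0 := by norm_num [F]
lemma F3at0 : F 3 0 = 0 := by norm_num [F]
lemma F4at0 : F 4 0 = 0 := by norm_num [F]
lemma F5at0 : F 5 0 = 0 := by norm_num [F]
lemma F6at0 : F 6 0 = 1152 := by norm_num [F]

lemma tpow_tendsto (c : ℝ) (n : ℕ) (hn : 0 < n) :
    Tendsto (fun t : ℝ => c * t ^ n) (𝓝[≠] (0:ℝ)) (𝓝 0) := by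
  apply tendsto_nhdsWithin_of_tendsto_nhds
  have : Continuous fun t : ℝ => c * t ^ n := by fun_prop
  simpa [zero_pow hn.ne'] using this.tendsto 0

lemma gderiv (c : ℝ) (n : ℕ) (t : ℝ) :
    HasDerivAt (fun t : ℝ => c * t ^ (n+1)) ((c * ((n : ℝ)+1)) * t ^ n) t := by
  have := (hasDerivAt_pow (n+1) t).const_mul c
  convert this using 1
  · rfl
  · rfl
  push_cast
  ring

lemma gderiv' (c d : ℝ) (m : ℕ) (hd : c * ((m : ℝ)+1) = d) (t : ℝ) :
    HasDerivAt (fun t : ℝ => c * t ^ (m+1)) (d * t ^ m) t := by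
  rw [← hd]; exact gderiv c m t

lemma key : Tendsto (fun t : ℝ => F 0 t / (18 * t ^ 6)) (𝓝[≠] (0:ℝ)) (𝓝 (4/45)) := by
  have hne : ∀ᶠ t in 𝓝[≠] (0:ℝ), t ≠ 0 := self_mem_nhdsWithin
  have step6 : Tendsto (fun t : ℝ => F 6 t / 12960) (𝓝[≠] (0:ℝ)) (𝓝 (4/45)) := by
    have h := (tendstoF 6 1152 F6at0).div_const 12960
    have e : (1152:ℝ)/12960 = 4/45 := by norm_num
    rw [e] at h; exact h
  have step5 : Tendsto (fun t : ℝ => F 5 t / (12960 * t ^ 1)) (𝓝[≠] (0:ℝ)) (𝓝 (4/45)) := by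
    apply HasDerivAt.lhopital_zero_nhdsNE
      (f' := F 6) (g' := fun _ => 12960)
      (hne.mono fun t _ => F_deriv5 t)
      (hne.mono fun t _ => by simpa using gderiv' 12960 12960 0 (by norm_num) t)
      (hne.mono fun t _ => by norm_num)
      (tendstoF 5 0 F5at0) (tpow_tendsto 12960 1 one_pos) step6
  have step4 : Tendsto (fun t : ℝ => F 4 t / (6480 * t ^ 2)) (𝓝[≠] (0:ℝ)) (𝓝 (4/45)) := by
    apply HasDerivAt.lhopital_zero_nhdsNE
      (f' := F 5) (g' := fun t => 12960 * t ^ 1)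
      (hne.mono fun t _ => F_deriv4 t)
      (hne.mono fun t _ => gderiv' 6480 12960 1 (by norm_num) t)
      (hne.mono fun t ht => by simpa using ht)
      (tendstoF 4 0 F4at0) (tpow_tendsto 6480 2 two_pos) step5
  have step3 : Tendsto (fun t : ℝ => F 3 t / (2160 * t ^ 3)) (𝓝[≠] (0:ℝ)) (𝓝 (4/45)) := by
    apply HasDerivAt.lhopital_zero_nhdsNE
      (f' := F 4) (g' := fun t => 6480 * t ^ 2)
      (hne.mono fun t _ => F_deriv3 t)
      (hne.mono fun t _ => gderiv' 2160 6480 2 (by norm_num) t)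
      (hne.mono fun t ht => by simp [pow_eq_zero_iff, ht])
      (tendstoF 3 0 F3at0) (tpow_tendsto 2160 3 (by norm_num)) step4
  have step2 : Tendsto (fun t : ℝ => F 2 t / (540 * t ^ 4)) (𝓝[≠] (0:ℝ)) (𝓝 (4/45)) := by
    apply HasDerivAt.lhopital_zero_nhdsNE
      (f' := F 3) (g' := fun t => 2160 * t ^ 3)
      (hne.mono fun t _ => F_deriv2 t)
      (hne.mono fun t _ => gderiv' 540 2160 3 (by norm_num) t)
      (hne.mono fun t ht => by simp [pow_eq_zero_iff, ht])
      (tendstoF 2 0 F2at0) (tpow_tendsto 540 4 (by norm_num)) step3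
  have step1 : Tendsto (fun t : ℝ => F 1 t / (108 * t ^ 5)) (𝓝[≠] (0:ℝ)) (𝓝 (4/45)) := by
    apply HasDerivAt.lhopital_zero_nhdsNE
      (f' := F 2) (g' := fun t => 540 * t ^ 4)
      (hne.mono fun t _ => F_deriv1 t)
      (hne.mono fun t _ => gderiv' 108 540 4 (by norm_num) t)
      (hne.mono fun t ht => by simp [pow_eq_zero_iff, ht])
      (tendstoF 1 0 F1at0) (tpow_tendsto 108 5 (by norm_num)) step2
  apply HasDerivAt.lhopital_zero_nhdsNE
    (f' := F 1) (g' := fun t => 108 * t ^ 5)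
    (hne.mono fun t _ => F_deriv0 t)
    (hne.mono fun t _ => gderiv' 18 108 5 (by norm_num) t)
    (hne.mono fun t ht => by simp [pow_eq_zero_iff, ht])
    (tendstoF 0 0 F0at0) (tpow_tendsto 18 6 (by norm_num)) step1

/-- Appendix A.3 of the paper: `lim_{a→1} Var(|F₁|²)/(log a)² = 4/45`, expressed as
the limit of the explicit formula divided by `18 (log a)⁶`. -/
theorem limit_var_F_sq :
    Filter.Tendsto
      (fun a : ℝ =>
        (711 - 640 * a - 72 * a ^ 2 + a ^ 4 + 396 * Real.log a + 384 * a * Real.log a +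
          72 * (Real.log a) ^ 2) / (18 * (Real.log a) ^ 6))
      (nhdsWithin 1 {a : ℝ | 0 < a ∧ a ≠ 1}) (nhds (4 / 45)) := by
  have hlog : Tendsto Real.log (𝓝[{a : ℝ | 0 < a ∧ a ≠ 1}] 1) (𝓝[≠] (0:ℝ)) := by
    apply tendsto_nhdsWithin_of_tendsto_nhds_of_eventually_within
    · apply tendsto_nhdsWithin_of_tendsto_nhds
      simpa using (Real.continuousAt_log one_ne_zero).tendsto
    · filter_upwards [self_mem_nhdsWithin] with a ha
      intro h
      rcases Real.log_eq_zero.mp h with h | h | h <;>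
        simp_all [Set.mem_setOf_eq] <;> linarith [ha.1]
  refine Filter.Tendsto.congr' ?_ (key.comp hlog)
  filter_upwards [self_mem_nhdsWithin] with a ha
  obtain ⟨ha0, ha1⟩ := ha
  have e1 : Real.exp (Real.log a) = a := Real.exp_log ha0
  have e2 : Real.exp (2 * Real.log a) = a ^ 2 := by
    rw [show (2:ℝ) * Real.log a = Real.log a + Real.log a by ring, Real.exp_add, e1]; ring
  have e4 : Real.exp (4 * Real.log a) = a ^ 4 := by
    rw [show (4:ℝ) * Real.log a = Real.log a + Real.log a + (Real.log a + Real.log a) by ring,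
      Real.exp_add, Real.exp_add, e1]; ring
  simp only [Function.comp, F, e1, e2, e4]
  ring
end

section
/- The limit as a → 1 (over real a > 0 with a ≠ 1) of ( 2(a − 1 − log a)/(log a)² − 1 )² / (log a)² equals 1/9. -/
open Real Filter Topology

lemma cube_aux :
    Tendsto (fun t : ℝ => (2 * Real.exp t - 2 - 2 * t - t ^ 2) / t ^ 3)
      (𝓝[≠] (0 : ℝ)) (𝓝 (1 / 3)) := by
  have habs : ∀ᶠ t in 𝓝[≠] (0 : ℝ), |t| ≤ 1 := by
    apply eventually_nhdsWithin_of_eventually_nhds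
    filter_upwards [Metric.closedBall_mem_nhds (0 : ℝ) one_pos] with t ht
    simpa [Real.dist_eq] using ht
  have h0 : Tendsto (fun t : ℝ => 2 * (Real.exp t - (1 + t + t ^ 2 / 2 + t ^ 3 / 6)) / t ^ 3)
      (𝓝[≠] (0 : ℝ)) (𝓝 0) := by
    have hlim : Tendsto (fun t : ℝ => (5 / 48) * |t|) (𝓝[≠] (0 : ℝ)) (𝓝 0) := by
      have : Tendsto (fun t : ℝ => (5 / 48) * |t|) (𝓝 (0 : ℝ)) (𝓝 ((5 / 48) * |(0 : ℝ)|)) :=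
        (continuous_const.mul continuous_abs).tendsto 0
      simpa using this.mono_left nhdsWithin_le_nhds
    refine squeeze_zero_norm' ?_ hlim
    · filter_upwards [self_mem_nhdsWithin, habs] with t ht ht1
      have ht0 : t ≠ 0 := ht
      have hsum : ∑ i ∈ Finset.range 4, t ^ i / (Nat.factorial i : ℝ)
          = 1 + t + t ^ 2 / 2 + t ^ 3 / 6 := by
        rw [Finset.sum_range_succ, Finset.sum_range_succ, Finset.sum_range_succ,
          Finset.sum_range_one]
        norm_num [Nat.factorial]
      have hb := Real.exp_bound ht1 (n := 4) (by norm_num)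
      rw [hsum] at hb
      have hb' : |Real.exp t - (1 + t + t ^ 2 / 2 + t ^ 3 / 6)| ≤ |t| ^ 4 * (5 / 96) := by
        convert hb using 2
        norm_num [Nat.factorial]
      have htpos : (0 : ℝ) < |t| := abs_pos.mpr ht0
      have : ‖2 * (Real.exp t - (1 + t + t ^ 2 / 2 + t ^ 3 / 6)) / t ^ 3‖
          = 2 * |Real.exp t - (1 + t + t ^ 2 / 2 + t ^ 3 / 6)| / |t| ^ 3 := by
        rw [Real.norm_eq_abs, abs_div, abs_mul, abs_pow]
        norm_num
      rw [this]
      rw [div_le_iff₀ (by positivity)]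
      calc 2 * |Real.exp t - (1 + t + t ^ 2 / 2 + t ^ 3 / 6)|
          ≤ 2 * (|t| ^ 4 * (5 / 96)) := by linarith
        _ = 5 / 48 * |t| * |t| ^ 3 := by ring
  have heq : ∀ᶠ t in 𝓝[≠] (0 : ℝ),
      1 / 3 + 2 * (Real.exp t - (1 + t + t ^ 2 / 2 + t ^ 3 / 6)) / t ^ 3
        = (2 * Real.exp t - 2 - 2 * t - t ^ 2) / t ^ 3 := by
    filter_upwards [self_mem_nhdsWithin] with t ht
    have ht0 : t ≠ 0 := ht
    field_simp
    ring
  have hsumT : Tendsto (fun t : ℝ =>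
      1 / 3 + 2 * (Real.exp t - (1 + t + t ^ 2 / 2 + t ^ 3 / 6)) / t ^ 3)
      (𝓝[≠] (0 : ℝ)) (𝓝 (1 / 3 + 0)) := Tendsto.add tendsto_const_nhds h0
  rw [add_zero] at hsumT
  exact Tendsto.congr' heq hsumT

/-- Appendix A.3 of the paper: `lim_{a→1} (E[|F₁|²] − 1)²/(log a)² = 1/9`, where
`E[|F₁|²] = 2(a − 1 − log a)/(log a)²`. -/
theorem limit_second_moment_minus_one_sq :
    Filter.Tendsto
      (fun a : ℝ =>
        (2 * (a - 1 - Real.log a) / (Real.log a) ^ 2 - 1) ^ 2 / (Real.log a) ^ 2)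
      (nhdsWithin 1 {a : ℝ | 0 < a ∧ a ≠ 1}) (nhds (1 / 9)) := by
  have hG : Tendsto (fun t : ℝ => ((2 * Real.exp t - 2 - 2 * t - t ^ 2) / t ^ 3) ^ 2)
      (𝓝[≠] (0 : ℝ)) (𝓝 (1 / 9)) := by
    have h := cube_aux.pow 2
    norm_num at h
    exact h
  have hlog : Tendsto Real.log (𝓝[{a : ℝ | 0 < a ∧ a ≠ 1}] 1) (𝓝[≠] (0 : ℝ)) := by
    rw [tendsto_nhdsWithin_iff]
    constructor
    · have h : Tendsto Real.log (𝓝[{a : ℝ | 0 < a ∧ a ≠ 1}] 1) (𝓝 (Real.log 1)) :=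
        (Real.continuousAt_log one_ne_zero).continuousWithinAt
      simpa using h
    · filter_upwards [self_mem_nhdsWithin] with a ha
      exact Real.log_ne_zero_of_pos_of_ne_one ha.1 ha.2
  have hcomp := hG.comp hlog
  apply Tendsto.congr' _ hcomp
  filter_upwards [self_mem_nhdsWithin] with a ha
  have ha0 : (0 : ℝ) < a := ha.1
  have hl : Real.log a ≠ 0 := Real.log_ne_zero_of_pos_of_ne_one ha.1 ha.2
  simp only [Function.comp]
  rw [show (2 : ℝ) * Real.exp (Real.log a) = 2 * a by rw [Real.exp_log ha0]]
  field_simp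
end

section
/- Let a > 0 and b > 0 be real numbers and u a real number. Then ∫_0^∞ (1/a)·e^{−x/a} · (1/√(π b x)) · e^{−(u − x)²/(b x)} dx = (1/√(a(a + b))) · exp( (2/b)·( u − |u|·√(1 + b/a) ) ). -/
open Real MeasureTheory


theorem gderiv_s17 (A B : ℝ) (x : ℝ) (hx : (0:ℝ) < x) :
    HasDerivWithinAt (fun y => A * Real.sqrt y - B / Real.sqrt y)
      (A / (2 * Real.sqrt x) + B / (2 * x * Real.sqrt x)) (Set.Ioi 0) x := by
  have hsx : Real.sqrt x ≠ 0 := by positivity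
  have hs := Real.hasDerivAt_sqrt hx.ne'
  have h2 : HasDerivAt (fun y => (Real.sqrt y)⁻¹) (-(1/(2*Real.sqrt x))/(Real.sqrt x)^2) x :=
    hs.inv hsx
  have h3 : HasDerivAt (fun y => A * Real.sqrt y - B / Real.sqrt y)
      (A * (1/(2*Real.sqrt x)) - B * (-(1/(2*Real.sqrt x))/(Real.sqrt x)^2)) x := by
    simpa [div_eq_mul_inv] using (hs.const_mul A).fun_sub (h2.const_mul B)
  have hx2 : (Real.sqrt x)^2 = x := Real.sq_sqrt hx.le
  have heq : A * (1/(2*Real.sqrt x)) - B * (-(1/(2*Real.sqrt x))/(Real.sqrt x)^2)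
      = A / (2 * Real.sqrt x) + B / (2 * x * Real.sqrt x) := by
    field_simp; rw [hx2]; ring
  rw [heq] at h3
  exact h3.hasDerivWithinAt

theorem ginj (A B : ℝ) (hA : 0 < A) (hB : 0 ≤ B) :
    Set.InjOn (fun y => A * Real.sqrt y - B / Real.sqrt y) (Set.Ioi 0) := by
  have hmono : StrictMonoOn (fun y => A * Real.sqrt y - B / Real.sqrt y) (Set.Ioi 0) := by
    intro x hx y hy hxy
    have hx0 : (0:ℝ) < x := hx
    have hy0 : (0:ℝ) < y := hy
    have hsx : 0 < Real.sqrt x := Real.sqrt_pos.2 hx0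
    have hsy : 0 < Real.sqrt y := Real.sqrt_pos.2 hy0
    have hss : Real.sqrt x < Real.sqrt y := Real.sqrt_lt_sqrt hx0.le hxy
    have h1 : A * Real.sqrt x < A * Real.sqrt y := by nlinarith
    have h2 : B / Real.sqrt y ≤ B / Real.sqrt x := by
      apply div_le_div_of_nonneg_left hB hsx hss.le
    simp only []
    linarith
  exact hmono.injOn

theorem gsurj (A B : ℝ) (hA : 0 < A) (hB : 0 < B) :
    (fun y => A * Real.sqrt y - B / Real.sqrt y) '' (Set.Ioi 0) = Set.univ := by
  apply Set.eq_univ_of_forall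
  intro y
  set D : ℝ := y^2 + 4*A*B with hD
  have hD0 : 0 ≤ D := by nlinarith
  have hDy : |y| < Real.sqrt D := by
    rw [show |y| = Real.sqrt (y^2) by rw [Real.sqrt_sq_eq_abs]]
    apply Real.sqrt_lt_sqrt (by positivity)
    nlinarith
  have hs0 : 0 < (y + Real.sqrt D) / (2*A) := by
    have h1 : -y ≤ |y| := neg_le_abs y
    have : 0 < y + Real.sqrt D := by linarith
    positivity
  set s : ℝ := (y + Real.sqrt D) / (2*A) with hs
  refine ⟨s^2, Set.mem_Ioi.mpr (by positivity), ?_⟩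
  have hsq : Real.sqrt (s^2) = s := Real.sqrt_sq hs0.le
  have hD2 : (Real.sqrt D)^2 = D := Real.sq_sqrt hD0
  simp only [hsq]
  have hAs : A * s^2 - y * s - B = 0 := by
    have h5 : A * s^2 - y * s - B = ((y + Real.sqrt D)^2 - 2*y*(y + Real.sqrt D) - 4*A*B) / (4*A) := by
      rw [hs]; field_simp; ring
    rw [h5, sub_eq_zero.mpr]
    · simp
    · nlinarith [hD2]
  field_simp
  nlinarith [hAs, hs0]

theorem moser_key (α β : ℝ) (hα : 0 < α) (hβ : 0 < β) :
    ∫ x in Set.Ioi (0:ℝ), (1 / Real.sqrt x) * Real.exp (-(α*x) - β/x)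
      = (Real.sqrt π / Real.sqrt α) * Real.exp (-(2 * (Real.sqrt α * Real.sqrt β))) := by
  set A := Real.sqrt α with hAdef
  set B := Real.sqrt β with hBdef
  have hA : 0 < A := Real.sqrt_pos.2 hα
  have hB : 0 < B := Real.sqrt_pos.2 hβ
  have hA2 : A^2 = α := Real.sq_sqrt hα.le
  have hB2 : B^2 = β := Real.sq_sqrt hβ.le
  set E : ℝ → ℝ := fun x => Real.exp (-(α*x) - β/x) with hEdef
  set F1 : ℝ → ℝ := fun x => A/(2*Real.sqrt x) * E x with hF1def
  set F2 : ℝ → ℝ := fun x => B/(2*x*Real.sqrt x) * E x with hF2def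
  set g : ℝ → ℝ := fun y => A * Real.sqrt y - B / Real.sqrt y with hgdef
  set g' : ℝ → ℝ := fun x => A / (2 * Real.sqrt x) + B / (2 * x * Real.sqrt x) with hg'def
  have hderiv : ∀ x ∈ Set.Ioi (0:ℝ), HasDerivWithinAt g (g' x) (Set.Ioi 0) x :=
    fun x hx => gderiv_s17 A B x hx
  have hinj : Set.InjOn g (Set.Ioi 0) := ginj A B hA hB.le
  have himg : g '' (Set.Ioi 0) = Set.univ := gsurj A B hA hB
  -- pointwise identity for the transformed integrand
  have hpt : ∀ x ∈ Set.Ioi (0:ℝ),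
      |g' x| • Real.exp (-(g x)^2) = Real.exp (2*(A*B)) * (F1 x + F2 x) := by
    intro x hx
    have hx0 : (0:ℝ) < x := hx
    have hsx : 0 < Real.sqrt x := Real.sqrt_pos.2 hx0
    have hx2 : (Real.sqrt x)^2 = x := Real.sq_sqrt hx0.le
    have hg'pos : 0 < g' x := by
      have : 0 < A / (2 * Real.sqrt x) := by positivity
      have : 0 < B / (2 * x * Real.sqrt x) := by positivity
      simp only [hg'def]
      positivity
    have hsq : (g x)^2 = α*x + β/x - 2*(A*B) := by
      simp only [hgdef]
      rw [← hA2, ← hB2]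
      have hxx : Real.sqrt x * Real.sqrt x = x := Real.mul_self_sqrt hx0.le
      field_simp
      linear_combination (A^2*(Real.sqrt x*Real.sqrt x) - B^2 + A^2*(x-1)*Real.sqrt x^2) * hxx
    rw [abs_of_pos hg'pos, smul_eq_mul, hsq,
      show -(α*x + β/x - 2*(A*B)) = 2*(A*B) + (-(α*x) - β/x) by ring, Real.exp_add]
    simp only [hg'def, hF1def, hF2def, hEdef]
    ring
  -- change of variables
  have hcov : Real.sqrt π = ∫ x in Set.Ioi (0:ℝ), |g' x| • Real.exp (-(g x)^2) := by
    rw [← integral_image_eq_integral_abs_deriv_smul measurableSet_Ioi hderiv hinj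
      (fun s => Real.exp (-s^2)), himg, Measure.restrict_univ]
    have := integral_gaussian 1
    simp only [one_mul, neg_mul, div_one] at this
    rw [← this]
  have hcov2 : Real.sqrt π = Real.exp (2*(A*B)) * ∫ x in Set.Ioi (0:ℝ), (F1 x + F2 x) := by
    rw [hcov, setIntegral_congr_fun measurableSet_Ioi hpt, integral_const_mul]
  -- integrability
  have hSint : IntegrableOn (fun x => |g' x| • Real.exp (-(g x)^2)) (Set.Ioi 0) := by
    rw [← integrableOn_image_iff_integrableOn_abs_deriv_smul measurableSet_Ioi hderiv hinj
      (fun s => Real.exp (-s^2)), himg]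
    have h := integrable_exp_neg_mul_sq (one_pos (α := ℝ))
    simp only [one_mul, neg_mul] at h
    exact h.integrableOn
  have hEcont : ContinuousOn E (Set.Ioi 0) := by
    apply Real.continuous_exp.comp_continuousOn
    apply ContinuousOn.sub
    · exact (continuous_const.mul continuous_id).neg.continuousOn
    · exact continuousOn_const.div continuousOn_id (fun x hx => ne_of_gt hx)
  have hF1cont : ContinuousOn F1 (Set.Ioi 0) := by
    apply ContinuousOn.mul _ hEcont
    apply continuousOn_const.div
    · exact (continuous_const.mul Real.continuous_sqrt).continuousOn
    · intro x hx
      have : (0:ℝ) < x := hx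
      positivity
  have hF2cont : ContinuousOn F2 (Set.Ioi 0) := by
    apply ContinuousOn.mul _ hEcont
    apply continuousOn_const.div
    · exact ((continuous_const.mul continuous_id).mul Real.continuous_sqrt).continuousOn
    · intro x hx
      have : (0:ℝ) < x := hx
      positivity
  have normbound : ∀ F : ℝ → ℝ, (∀ x ∈ Set.Ioi (0:ℝ), 0 ≤ F x ∧ F x ≤ F1 x + F2 x) →
      ∀ᵐ x ∂(volume.restrict (Set.Ioi 0)),
        ‖F x‖ ≤ ‖|g' x| • Real.exp (-(g x)^2)‖ := by
    intro F hF
    rw [ae_restrict_iff' measurableSet_Ioi]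
    filter_upwards with x
    intro hx
    have hx0 : (0:ℝ) < x := hx
    have hsx : 0 < Real.sqrt x := Real.sqrt_pos.2 hx0
    have hF1pos : 0 ≤ F1 x := by simp only [hF1def, hEdef]; positivity
    have hF2pos : 0 ≤ F2 x := by simp only [hF2def, hEdef]; positivity
    have he1 : (1:ℝ) ≤ Real.exp (2*(A*B)) := Real.one_le_exp (by positivity)
    obtain ⟨h0, hle⟩ := hF x hx
    rw [hpt x hx, Real.norm_eq_abs, Real.norm_eq_abs, abs_of_nonneg h0,
      abs_of_nonneg (by positivity)]
    nlinarith
  have hF1int : IntegrableOn F1 (Set.Ioi 0) :=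
    Integrable.mono hSint (hF1cont.aestronglyMeasurable measurableSet_Ioi)
      (normbound F1 (fun x hx => ⟨by simp only [hF1def, hEdef]; have : (0:ℝ) < x := hx; positivity,
        by have hx0 : (0:ℝ) < x := hx; have : 0 ≤ F2 x := by simp only [hF2def, hEdef]; positivity
           linarith⟩))
  have hF2int : IntegrableOn F2 (Set.Ioi 0) :=
    Integrable.mono hSint (hF2cont.aestronglyMeasurable measurableSet_Ioi)
      (normbound F2 (fun x hx => ⟨by simp only [hF2def, hEdef]; have : (0:ℝ) < x := hx; positivity,
        by have hx0 : (0:ℝ) < x := hx; have : 0 ≤ F1 x := by simp only [hF1def, hEdef]; positivity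
           linarith⟩))
  -- reflection: ∫ F1 = ∫ F2
  set c : ℝ := β / α with hcdef
  have hc : 0 < c := by positivity
  have hsc : Real.sqrt c = B / A := by
    rw [hcdef, Real.sqrt_div hβ.le]
  have hc' : c = B^2/A^2 := by rw [hcdef, ← hA2, ← hB2]
  set r : ℝ → ℝ := fun x => c / x with hrdef
  have hrderiv : ∀ x ∈ Set.Ioi (0:ℝ), HasDerivWithinAt r (-(c / x^2)) (Set.Ioi 0) x := by
    intro x hx
    have hx0 : (0:ℝ) < x := hx
    have h := (hasDerivAt_inv hx0.ne').const_mul c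
    have heq : c * -(x^2)⁻¹ = -(c / x^2) := by field_simp
    rw [heq] at h
    have : (fun y => c * y⁻¹) = r := by funext y; rw [hrdef]; ring
    rw [this] at h
    exact h.hasDerivWithinAt
  have hrinj : Set.InjOn r (Set.Ioi 0) := by
    intro x hx y hy h
    have hx0 : (0:ℝ) < x := hx
    have hy0 : (0:ℝ) < y := hy
    simp only [hrdef] at h
    rw [div_eq_div_iff hx0.ne' hy0.ne'] at h
    have := mul_left_cancel₀ hc.ne' h
    linarith
  have hrimg : r '' (Set.Ioi 0) = Set.Ioi 0 := by
    ext y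
    constructor
    · rintro ⟨x, hx, rfl⟩
      exact Set.mem_Ioi.2 (div_pos hc hx)
    · intro hy
      have hy0 : (0:ℝ) < y := hy
      exact ⟨c/y, Set.mem_Ioi.2 (div_pos hc hy0), by simp only [hrdef]; field_simp⟩
  have hrefl : ∫ x in Set.Ioi (0:ℝ), F1 x = ∫ x in Set.Ioi (0:ℝ), F2 x := by
    conv_lhs => rw [← hrimg]
    rw [integral_image_eq_integral_abs_deriv_smul measurableSet_Ioi hrderiv hrinj F1]
    apply setIntegral_congr_fun measurableSet_Ioi
    intro x hx
    have hx0 : (0:ℝ) < x := hx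
    have hsx : 0 < Real.sqrt x := Real.sqrt_pos.2 hx0
    have hxx : Real.sqrt x * Real.sqrt x = x := Real.mul_self_sqrt hx0.le
    have hE : E (r x) = E x := by
      simp only [hEdef, hrdef]
      congr 1
      rw [hcdef]
      field_simp
      ring
    have hscx : Real.sqrt (r x) = (B/A) / Real.sqrt x := by
      simp only [hrdef]
      rw [Real.sqrt_div hc.le, hsc]
    have habs : |(-(c / x^2))| = c / x^2 := by
      rw [abs_neg, abs_of_pos (by positivity)]
    simp only [smul_eq_mul]
    rw [habs]
    simp only [hF1def, hF2def, hscx, hE, hc']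
    field_simp
    linear_combination (E x) * hxx
  -- final assembly
  have hint : ∫ x in Set.Ioi (0:ℝ), (F1 x + F2 x) = 2 * ∫ x in Set.Ioi (0:ℝ), F1 x := by
    rw [integral_add hF1int hF2int, ← hrefl]
    ring
  have hF1val : ∫ x in Set.Ioi (0:ℝ), F1 x = Real.sqrt π * Real.exp (-(2*(A*B))) / 2 := by
    have h := hcov2
    rw [hint] at h
    have hepos := Real.exp_pos (2*(A*B))
    rw [Real.exp_neg]
    field_simp
    rw [h]; ring_nf
  have hT : ∫ x in Set.Ioi (0:ℝ), (1 / Real.sqrt x) * E x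
      = (2/A) * ∫ x in Set.Ioi (0:ℝ), F1 x := by
    rw [← integral_const_mul]
    apply setIntegral_congr_fun measurableSet_Ioi
    intro x hx
    have hx0 : (0:ℝ) < x := hx
    have hsx : 0 < Real.sqrt x := Real.sqrt_pos.2 hx0
    simp only [hF1def]
    field_simp
  calc ∫ x in Set.Ioi (0:ℝ), (1 / Real.sqrt x) * Real.exp (-(α*x) - β/x)
      = ∫ x in Set.Ioi (0:ℝ), (1 / Real.sqrt x) * E x := rfl
    _ = (2/A) * (Real.sqrt π * Real.exp (-(2*(A*B))) / 2) := by rw [hT, hF1val]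
    _ = (Real.sqrt π / Real.sqrt α) * Real.exp (-(2 * (Real.sqrt α * Real.sqrt β))) := by
        rw [← hAdef, ← hBdef]
        field_simp


theorem moser_key0 (α : ℝ) (hα : 0 < α) :
    ∫ x in Set.Ioi (0:ℝ), (1 / Real.sqrt x) * Real.exp (-(α*x))
      = Real.sqrt π / Real.sqrt α := by
  set A := Real.sqrt α with hAdef
  have hA : 0 < A := Real.sqrt_pos.2 hα
  have hA2 : A^2 = α := Real.sq_sqrt hα.le
  set g : ℝ → ℝ := fun y => A * Real.sqrt y with hgdef
  have hderiv : ∀ x ∈ Set.Ioi (0:ℝ), HasDerivWithinAt g (A / (2 * Real.sqrt x)) (Set.Ioi 0) x := by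
    intro x hx
    have hx0 : (0:ℝ) < x := hx
    have h := (Real.hasDerivAt_sqrt hx0.ne').const_mul A
    have heq : A * (1 / (2 * Real.sqrt x)) = A / (2 * Real.sqrt x) := by ring
    rw [heq] at h
    exact h.hasDerivWithinAt
  have hinj : Set.InjOn g (Set.Ioi 0) := by
    intro x hx y hy h
    have hx0 : (0:ℝ) < x := hx
    have hy0 : (0:ℝ) < y := hy
    simp only [hgdef] at h
    have h2 : Real.sqrt x = Real.sqrt y := mul_left_cancel₀ hA.ne' h
    calc x = (Real.sqrt x)^2 := (Real.sq_sqrt hx0.le).symm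
      _ = (Real.sqrt y)^2 := by rw [h2]
      _ = y := Real.sq_sqrt hy0.le
  have himg : g '' (Set.Ioi 0) = Set.Ioi 0 := by
    ext y
    constructor
    · rintro ⟨x, hx, rfl⟩
      have hx0 : (0:ℝ) < x := hx
      have : 0 < Real.sqrt x := Real.sqrt_pos.2 hx0
      exact Set.mem_Ioi.2 (by positivity)
    · intro hy
      have hy0 : (0:ℝ) < y := hy
      refine ⟨(y/A)^2, Set.mem_Ioi.2 (by positivity), ?_⟩
      simp only [hgdef]
      rw [Real.sqrt_sq (by positivity)]
      field_simp
  have hcov : Real.sqrt (π/1) / 2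
      = ∫ x in Set.Ioi (0:ℝ), |A / (2 * Real.sqrt x)| • Real.exp (-(g x)^2) := by
    rw [← integral_image_eq_integral_abs_deriv_smul measurableSet_Ioi hderiv hinj
      (fun s => Real.exp (-s^2)), himg, ← integral_gaussian_Ioi 1]
    simp only [one_mul, neg_mul]
  have hpt : ∀ x ∈ Set.Ioi (0:ℝ),
      |A / (2 * Real.sqrt x)| • Real.exp (-(g x)^2)
        = (A/2) * ((1 / Real.sqrt x) * Real.exp (-(α*x))) := by
    intro x hx
    have hx0 : (0:ℝ) < x := hx
    have hsx : 0 < Real.sqrt x := Real.sqrt_pos.2 hx0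
    have hsq : (g x)^2 = α * x := by
      simp only [hgdef]
      rw [mul_pow, Real.sq_sqrt hx0.le, hA2]
    rw [hsq, abs_of_pos (by positivity), smul_eq_mul]
    field_simp
  rw [setIntegral_congr_fun measurableSet_Ioi hpt, integral_const_mul] at hcov
  have hπ : Real.sqrt (π/1) = Real.sqrt π := by norm_num
  rw [hπ] at hcov
  field_simp at hcov ⊢
  linarith


/-- Moser's closed-form integral (eq. (140) of Moser's appendix, as used in the
paper): for `a > 0`, `b > 0` and any real `u`,
`∫_0^∞ (1/a) e^{−x/a} (1/√(πbx)) e^{−(u−x)²/(bx)} dx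
  = (1/√(a(a+b))) exp((2/b)(u − |u|√(1 + b/a)))`. -/
theorem moser_integral (a b u : ℝ) (ha : 0 < a) (hb : 0 < b) :
    (∫ x in Set.Ioi (0:ℝ),
        (1 / a) * Real.exp (-x / a) * (1 / Real.sqrt (π * b * x)) *
          Real.exp (-(u - x) ^ 2 / (b * x))) =
      (1 / Real.sqrt (a * (a + b))) *
        Real.exp ((2 / b) * (u - |u| * Real.sqrt (1 + b / a))) := by
  set α : ℝ := 1/a + 1/b with hαdef
  have hα : 0 < α := by positivity
  have hsb : (0:ℝ) < Real.sqrt b := Real.sqrt_pos.2 hb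
  have hsα : (0:ℝ) < Real.sqrt α := Real.sqrt_pos.2 hα
  have hsπ : (0:ℝ) < Real.sqrt π := Real.sqrt_pos.2 pi_pos
  -- common factor identity
  have hfac : (1/a) * (1 / Real.sqrt (π*b)) * (Real.sqrt π / Real.sqrt α)
      = 1 / Real.sqrt (a*(a+b)) := by
    rw [Real.sqrt_mul pi_pos.le]
    have e1 : a*(a+b) = a^2*(b*α) := by rw [hαdef]; field_simp; ring
    have e2 : Real.sqrt (a*(a+b)) = a * (Real.sqrt b * Real.sqrt α) := by
      rw [e1, Real.sqrt_mul (by positivity), Real.sqrt_sq ha.le, Real.sqrt_mul hb.le]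
    rw [e2]
    field_simp
  rcases eq_or_ne u 0 with hu | hu
  · -- u = 0 case
    subst hu
    have hcong : ∀ x ∈ Set.Ioi (0:ℝ),
        (1 / a) * Real.exp (-x / a) * (1 / Real.sqrt (π * b * x)) *
          Real.exp (-((0:ℝ) - x) ^ 2 / (b * x))
        = ((1/a) * (1 / Real.sqrt (π*b))) * ((1 / Real.sqrt x) * Real.exp (-(α*x))) := by
      intro x hx
      have hx0 : (0:ℝ) < x := hx
      have hsx : 0 < Real.sqrt x := Real.sqrt_pos.2 hx0
      have hsqrt : Real.sqrt (π*b*x) = Real.sqrt (π*b) * Real.sqrt x := by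
        rw [Real.sqrt_mul (by positivity)]
      have hexp : Real.exp (-x/a) * Real.exp (-((0:ℝ)-x)^2/(b*x)) = Real.exp (-(α*x)) := by
        rw [← Real.exp_add]
        congr 1
        rw [hαdef]
        field_simp
        ring
      rw [hsqrt, ← hexp]
      have h1 : 0 < Real.sqrt (π*b) := Real.sqrt_pos.2 (by positivity)
      field_simp
    rw [setIntegral_congr_fun measurableSet_Ioi hcong, integral_const_mul, moser_key0 α hα]
    simp only [abs_zero, zero_mul, sub_zero, mul_zero, Real.exp_zero, mul_one]
    exact hfac
  · -- u ≠ 0 case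
    set β : ℝ := u^2/b with hβdef
    have hβ : 0 < β := by positivity
    have hcong : ∀ x ∈ Set.Ioi (0:ℝ),
        (1 / a) * Real.exp (-x / a) * (1 / Real.sqrt (π * b * x)) *
          Real.exp (-(u - x) ^ 2 / (b * x))
        = ((1/a) * (1 / Real.sqrt (π*b)) * Real.exp (2*u/b))
            * ((1 / Real.sqrt x) * Real.exp (-(α*x) - β/x)) := by
      intro x hx
      have hx0 : (0:ℝ) < x := hx
      have hsx : 0 < Real.sqrt x := Real.sqrt_pos.2 hx0
      have hsqrt : Real.sqrt (π*b*x) = Real.sqrt (π*b) * Real.sqrt x := by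
        rw [Real.sqrt_mul (by positivity)]
      have hexp : Real.exp (-x/a) * Real.exp (-(u-x)^2/(b*x))
          = Real.exp (2*u/b) * Real.exp (-(α*x) - β/x) := by
        rw [← Real.exp_add, ← Real.exp_add]
        congr 1
        rw [hαdef, hβdef]
        field_simp
        ring
      rw [hsqrt]
      have h1 : 0 < Real.sqrt (π*b) := Real.sqrt_pos.2 (by positivity)
      calc (1/a) * Real.exp (-x/a) * (1/(Real.sqrt (π*b) * Real.sqrt x)) *
              Real.exp (-(u-x)^2/(b*x))
          = (1/a) * (1/(Real.sqrt (π*b) * Real.sqrt x)) *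
              (Real.exp (-x/a) * Real.exp (-(u-x)^2/(b*x))) := by ring
        _ = (1/a) * (1/(Real.sqrt (π*b) * Real.sqrt x)) *
              (Real.exp (2*u/b) * Real.exp (-(α*x) - β/x)) := by rw [hexp]
        _ = ((1/a) * (1 / Real.sqrt (π*b)) * Real.exp (2*u/b))
              * ((1 / Real.sqrt x) * Real.exp (-(α*x) - β/x)) := by field_simp
    rw [setIntegral_congr_fun measurableSet_Ioi hcong, integral_const_mul,
      moser_key α β hα hβ]
    have hAB : Real.sqrt α * Real.sqrt β = |u| * Real.sqrt (1+b/a) / b := by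
      rw [hβdef, Real.sqrt_div (sq_nonneg u), Real.sqrt_sq_eq_abs]
      have h3 : Real.sqrt α / Real.sqrt b = Real.sqrt (1+b/a) / b := by
        rw [← Real.sqrt_div hα.le]
        have h4 : α / b = (1+b/a)/b^2 := by rw [hαdef]; field_simp; ring
        rw [h4, Real.sqrt_div (by positivity), Real.sqrt_sq hb.le]
      calc Real.sqrt α * (|u| / Real.sqrt b) = |u| * (Real.sqrt α / Real.sqrt b) := by ring
        _ = |u| * (Real.sqrt (1+b/a) / b) := by rw [h3]
        _ = |u| * Real.sqrt (1+b/a) / b := by ring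
    have hexps : Real.exp (2*u/b) * Real.exp (-(2 * (Real.sqrt α * Real.sqrt β)))
        = Real.exp ((2/b) * (u - |u| * Real.sqrt (1+b/a))) := by
      rw [← Real.exp_add, hAB]
      congr 1
      field_simp
      ring
    calc (1/a) * (1 / Real.sqrt (π*b)) * Real.exp (2*u/b)
          * ((Real.sqrt π / Real.sqrt α) * Real.exp (-(2 * (Real.sqrt α * Real.sqrt β))))
        = ((1/a) * (1 / Real.sqrt (π*b)) * (Real.sqrt π / Real.sqrt α))
            * (Real.exp (2*u/b) * Real.exp (-(2 * (Real.sqrt α * Real.sqrt β)))) := by ring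
      _ = (1 / Real.sqrt (a*(a+b))) * Real.exp ((2/b) * (u - |u| * Real.sqrt (1+b/a))) := by
          rw [hfac, hexps]
end
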